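/- arXiv:0908.3724 — 2 statements merged into one kernel-verified Lean document; each statement's English description precedes it below -/
import Mathlib

section
/- Let s ≥ 0, let h = 2^s, and let ε ∈ {1, -1}. Let A = ℤ₍₂₎[X]/(X^h - ε), where ℤ₍₂₎ denotes the localization of ℤ at the prime 2, and consider the ring map A → ℤ/2 induced by X ↦ 1 and reduction mod 2. Then an element x ∈ A is a unit of A if and only if its image in ℤ/2 under this map is nonzero (equivalently, iff the sum of its coefficients is odd). -/
set_option maxHeartbeats 1000000
set_option synthInstance.maxHeartbeats 400000


open Polynomial

instance span_two_prime : (Ideal.span {(2 : ℤ)}).IsPrime :=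
  (Ideal.span_singleton_prime (by norm_num)).mpr Int.prime_two

/-- `ℤ₍₂₎`, the localization of `ℤ` at the prime `(2)`. -/
abbrev Zloc : Type := Localization.AtPrime (Ideal.span {(2 : ℤ)})

/-- The residue map `ℤ₍₂₎ → ℤ/2` (reduction mod 2). -/
noncomputable def resZ : Zloc →+* ZMod 2 :=
  IsLocalization.lift (M := (Ideal.span {(2 : ℤ)}).primeCompl)
    (g := Int.castRingHom (ZMod 2))
    (by
      rintro ⟨y, hy⟩
      have hy' : y ∉ Ideal.span {(2 : ℤ)} := hy
      rw [Ideal.mem_span_singleton] at hy'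
      have hne : ((y : ℤ) : ZMod 2) ≠ 0 := by
        simpa [ZMod.intCast_zmod_eq_zero_iff_dvd] using hy'
      haveI : Fact (Nat.Prime 2) := ⟨Nat.prime_two⟩
      simpa using isUnit_iff_ne_zero.mpr hne)

/-- `A = ℤ₍₂₎[X]/(X^h - ε)`. -/
abbrev Aq (h : ℕ) (ε : ℤ) : Type :=
  Zloc[X] ⧸ Ideal.span {(X : Zloc[X]) ^ h - C ((ε : ℤ) : Zloc)}

lemma resZ_algebraMap (a : ℤ) : resZ (algebraMap ℤ Zloc a) = (a : ZMod 2) := by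
  simp [resZ, IsLocalization.lift_eq]

lemma resZ_intCast (a : ℤ) : resZ ((a : ℤ) : Zloc) = (a : ZMod 2) := by
  simpa using resZ_algebraMap a

lemma resZ_two : resZ (2 : Zloc) = 0 := by
  have := resZ_intCast 2
  norm_num at this ⊢
  rw [this]; decide

lemma two_dvd_of_resZ_eq_zero (c : Zloc) (h : resZ c = 0) : ∃ d : Zloc, c = 2 * d := by
  obtain ⟨⟨a, s⟩, rfl⟩ :=
    IsLocalization.mk'_surjective (Ideal.span {(2 : ℤ)}).primeCompl c
  have hs := IsLocalization.mk'_spec (Localization.AtPrime (Ideal.span {(2 : ℤ)})) a s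
  have h2 := congrArg resZ hs
  rw [map_mul, h, zero_mul, resZ_algebraMap] at h2
  have hdvd : (2 : ℤ) ∣ a := by
    exact_mod_cast (ZMod.intCast_zmod_eq_zero_iff_dvd a 2).mp h2.symm
  obtain ⟨b, rfl⟩ := hdvd
  refine ⟨algebraMap ℤ Zloc b * IsLocalization.mk' _ 1 s, ?_⟩
  dsimp only
  rw [IsLocalization.mk'_eq_mul_mk'_one, map_mul, map_ofNat]
  ring

lemma two_dvd_poly_of_map_zero (q : Zloc[X]) (h : q.map resZ = 0) :
    ∃ r : Zloc[X], q = 2 * r := by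
  have hmem : q ∈ Ideal.map (C : Zloc →+* Zloc[X]) (Ideal.span {(2 : Zloc)}) := by
    rw [Ideal.mem_map_C_iff]
    intro n
    rw [Ideal.mem_span_singleton]
    obtain ⟨d, hd⟩ := two_dvd_of_resZ_eq_zero (q.coeff n) (by
      have := congrArg (fun p => Polynomial.coeff p n) h
      simpa [Polynomial.coeff_map] using this)
    exact ⟨d, hd⟩
  rw [Ideal.map_span, Set.image_singleton, Ideal.mem_span_singleton] at hmem
  obtain ⟨r, hr⟩ := hmem
  exact ⟨r, by simpa [← C_ofNat] using hr⟩

lemma key_poly (s : ℕ) (ε : ℤ) (hε : ε = 1 ∨ ε = -1) :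
    ∃ r : Zloc[X], ((X : Zloc[X]) - C 1) ^ (2 ^ s) =
      ((X : Zloc[X]) ^ (2 ^ s) - C ((ε : ℤ) : Zloc)) + 2 * r := by
  have hmap : (((X : Zloc[X]) - C 1) ^ (2 ^ s)
      - ((X : Zloc[X]) ^ (2 ^ s) - C ((ε : ℤ) : Zloc))).map resZ = 0 := by
      rw [Polynomial.map_sub, Polynomial.map_sub, Polynomial.map_pow, Polynomial.map_pow,
        Polynomial.map_sub, Polynomial.map_X, Polynomial.map_C, Polynomial.map_C]
      have h1 : (resZ 1 : ZMod 2) = 1 := map_one resZ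
      have h2 : resZ ((ε : ℤ) : Zloc) = 1 := by
        rw [resZ_intCast]; rcases hε with rfl | rfl <;> push_cast <;> decide
      rw [h1, h2]
      have hone : ((1 : ZMod 2)) = -1 := rfl
      have hX : ((X : (ZMod 2)[X]) - C 1) = X + C 1 := by
        rw [sub_eq_add_neg, ← C_neg, ← hone]
      rw [hX]
      haveI : Fact (Nat.Prime 2) := ⟨Nat.prime_two⟩
      have hchar : ((X : (ZMod 2)[X]) + C 1) ^ (2 ^ s) = X ^ (2 ^ s) + (C 1) ^ (2 ^ s) :=
        add_pow_char_pow X (C 1) 2 s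
      rw [hchar]
      have h2z : (2 : (ZMod 2)[X]) = 0 := by
        have hz : (2 : ZMod 2) = 0 := rfl
        rw [← map_ofNat (C : ZMod 2 →+* (ZMod 2)[X]) 2, hz, C_0]
      rw [C_1, one_pow]
      linear_combination h2z
  obtain ⟨r, hr⟩ := two_dvd_poly_of_map_zero _ hmap
  exact ⟨r, by linear_combination hr⟩

lemma two_mem_max (h : ℕ) (hh : h ≠ 0) (ε : ℤ) (M : Ideal (Aq h ε)) (hM : M.IsMaximal) :
    (2 : Aq h ε) ∈ M := by
  haveI := hM
  have hm : ((X : Zloc[X]) ^ h - C ((ε : ℤ) : Zloc)).Monic := monic_X_pow_sub_C _ hh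
  haveI : Module.Finite Zloc (Aq h ε) :=
    Module.Finite.of_basis (AdjoinRoot.powerBasis' hm).basis
  haveI : Algebra.IsIntegral Zloc (Aq h ε) := Algebra.IsIntegral.of_finite _ _
  have hcm : (M.comap (algebraMap Zloc (Aq h ε))).IsMaximal :=
    Ideal.isMaximal_comap_of_isIntegral_of_isMaximal (R := Zloc) (S := Aq h ε) M
  have h2 : (2 : Zloc) ∈ M.comap (algebraMap Zloc (Aq h ε)) := by
    rw [IsLocalRing.eq_maximalIdeal hcm, IsLocalRing.mem_maximalIdeal, mem_nonunits_iff]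
    intro hu
    have := hu.map resZ
    rw [resZ_two] at this
    exact not_isUnit_zero this
  have := Ideal.mem_comap.mp h2
  rwa [map_ofNat] at this

theorem stmt0' (s : ℕ) (ε : ℤ) (hε : ε = 1 ∨ ε = -1) (x : Aq (2 ^ s) ε)
    (projA : Aq (2 ^ s) ε →+* ZMod 2)
    (hproj : ∀ p : Zloc[X],
      projA (Ideal.Quotient.mk _ p) = eval₂ resZ 1 p) :
    IsUnit x ↔ projA x ≠ 0 := by
  constructor
  · intro hu h0
    have hv := hu.map projA
    rw [h0] at hv
    exact not_isUnit_zero hv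
  · intro hne
    have h1 : projA x = 1 := by
      have hall : ∀ a : ZMod 2, a ≠ 0 → a = 1 := by decide
      exact hall _ hne
    obtain ⟨p, rfl⟩ := Ideal.Quotient.mk_surjective x
    rw [hproj, eval₂_at_one] at h1
    obtain ⟨d, hd⟩ := two_dvd_of_resZ_eq_zero (p.eval 1 - 1)
      (by rw [map_sub, h1, map_one, sub_self])
    obtain ⟨q, hq⟩ := X_sub_C_dvd_sub_C_eval (a := (1 : Zloc)) (p := p)
    have hC : C (p.eval 1) = (1 : Zloc[X]) + 2 * C d := by
      have he : p.eval 1 = 1 + 2 * d := by linear_combination hd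
      rw [he, map_add, map_mul, map_one, map_ofNat]
    have hp : p = ((X : Zloc[X]) - C 1) * q + 1 + 2 * C d := by
      linear_combination hq + hC
    refine Ideal.isUnit_of_sub_one_mem_jacobson_bot (R := Aq (2 ^ s) ε) _ ?_
    rw [Ideal.jacobson, Ideal.mem_sInf]
    rintro J ⟨-, hJmax⟩
    have h2J : (2 : Aq (2 ^ s) ε) ∈ J :=
      two_mem_max (2 ^ s) (pow_ne_zero s two_ne_zero) ε J hJmax
    have hXJ : Ideal.Quotient.mk _ ((X : Zloc[X]) - C 1) ∈ J := by
      obtain ⟨r, hr⟩ := key_poly s ε hε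
      have hpow : (Ideal.Quotient.mk (Ideal.span {(X : Zloc[X]) ^ (2 ^ s) - C ((ε : ℤ) : Zloc)})
          ((X : Zloc[X]) - C 1)) ^ (2 ^ s) = 2 * Ideal.Quotient.mk _ r := by
        rw [← map_pow, hr, map_add, map_mul]
        have hz : Ideal.Quotient.mk (Ideal.span {(X : Zloc[X]) ^ (2 ^ s) - C ((ε : ℤ) : Zloc)})
            ((X : Zloc[X]) ^ (2 ^ s) - C ((ε : ℤ) : Zloc)) = 0 :=
          Ideal.Quotient.eq_zero_iff_mem.mpr (Ideal.subset_span rfl)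
        rw [hz, zero_add, map_ofNat]
      have hJp : J.IsPrime := by
        exact @Ideal.IsMaximal.isPrime (Aq (2 ^ s) ε) (Ideal.Quotient.commRing _).toCommSemiring J hJmax
      exact hJp.mem_of_pow_mem (2 ^ s)
        (hpow ▸ J.mul_mem_right (Ideal.Quotient.mk _ r) h2J)
    have hdec : Ideal.Quotient.mk (Ideal.span {(X : Zloc[X]) ^ (2 ^ s) - C ((ε : ℤ) : Zloc)}) p
        - 1 = Ideal.Quotient.mk _ ((X : Zloc[X]) - C 1) * Ideal.Quotient.mk _ q
          + 2 * Ideal.Quotient.mk _ (C d) := by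
      rw [hp]
      simp only [map_add, map_mul, map_one, map_ofNat]
      ring
    rw [hdec]
    exact Ideal.add_mem J
      (J.mul_mem_right (Ideal.Quotient.mk (Ideal.span {(X : Zloc[X]) ^ (2 ^ s)
        - C ((ε : ℤ) : Zloc)}) q) hXJ)
      (J.mul_mem_right (Ideal.Quotient.mk (Ideal.span {(X : Zloc[X]) ^ (2 ^ s)
        - C ((ε : ℤ) : Zloc)}) (C d)) h2J)

/-- The ring map `A → ℤ/2` induced by `X ↦ 1` and reduction mod 2; it sends the class of
`Σ aⱼ Xʲ` to `Σ aⱼ mod 2`. -/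
noncomputable def projA (h : ℕ) (ε : ℤ) (hε : ε = 1 ∨ ε = -1) : Aq h ε →+* ZMod 2 :=
  Ideal.Quotient.lift _ (eval₂RingHom resZ 1)
    (by
      intro a ha
      rw [Ideal.mem_span_singleton] at ha
      obtain ⟨b, rfl⟩ := ha
      rw [map_mul]
      have hz : (eval₂RingHom resZ 1) ((X : Zloc[X]) ^ h - C ((ε : ℤ) : Zloc)) = 0 := by
        simp only [coe_eval₂RingHom, eval₂_sub, eval₂_pow, eval₂_X, eval₂_C, one_pow]
        rw [map_intCast]
        rcases hε with rfl | rfl <;> simp [sub_eq_zero] <;> decide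
      rw [hz, zero_mul])

/-- Let `s ≥ 0`, `h = 2^s`, `ε ∈ {1, -1}` and `A = ℤ₍₂₎[X]/(X^h - ε)`.  An element
`x ∈ A` is a unit of `A` iff its image in `ℤ/2` under the map induced by `X ↦ 1` and
reduction mod 2 is nonzero (iff the sum of its coefficients is odd). -/
theorem stmt0 (s : ℕ) (ε : ℤ) (hε : ε = 1 ∨ ε = -1) (x : Aq (2 ^ s) ε) :
    IsUnit x ↔ projA (2 ^ s) ε hε x ≠ 0 := by
  exact stmt0' s ε hε x (projA (2 ^ s) ε hε) (fun p => by
    simp only [projA, Ideal.Quotient.lift_mk, coe_eval₂RingHom])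
end

section
/- Let R be a commutative ring, J a finite type, and for each j ∈ J let I_j be a type and M_{j,i} an R-module for each i ∈ I_j. Then there is an R-module isomorphism ⨂_{j ∈ J} (⨁_{i ∈ I_j} M_{j,i}) ≅ ⨁_{s ∈ Π_{j∈J} I_j} (⨂_{j ∈ J} M_{j, s(j)}), where the direct sum on the right is indexed by the set of sections s assigning to each j ∈ J an element s(j) ∈ I_j. -/
open scoped TensorProduct

/-- Auxiliary: the distributive law stated for `DFinsupp` (`Π₀`). -/
noncomputable def auxEquiv11 (R : Type*) [CommRing R] (J : Type*) [Fintype J] [DecidableEq J]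
    (I : J → Type*) [∀ j, DecidableEq (I j)] (M : (j : J) → I j → Type*)
    [∀ j i, AddCommGroup (M j i)] [∀ j i, Module R (M j i)] :
    (PiTensorProduct R fun j => Π₀ i : I j, M j i) ≃ₗ[R]
      (Π₀ s : (j : J) → I j, PiTensorProduct R fun j => M j (s j)) :=
  LinearEquiv.ofLinear
    (PiTensorProduct.lift
      (MultilinearMap.dfinsuppFamily fun s => PiTensorProduct.tprod R (s := fun j => M j (s j))))
    (DFinsupp.lsum ℕ fun s =>
      PiTensorProduct.map fun j =>
        (DFinsupp.lsingle (s j) : M j (s j) →ₗ[R] Π₀ i, M j i))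
    (by
      apply DFinsupp.lhom_ext'
      intro s
      apply PiTensorProduct.ext
      apply MultilinearMap.ext
      intro m
      show PiTensorProduct.lift
          (MultilinearMap.dfinsuppFamily fun s =>
            PiTensorProduct.tprod R (s := fun j => M j (s j)))
          ((DFinsupp.lsum ℕ fun s => PiTensorProduct.map fun j =>
            (DFinsupp.lsingle (s j) : M j (s j) →ₗ[R] Π₀ i, M j i))
            (DFinsupp.single s (PiTensorProduct.tprod R m))) =
        DFinsupp.single s (PiTensorProduct.tprod R m)
      rw [DFinsupp.lsum_single, PiTensorProduct.map_tprod, PiTensorProduct.lift.tprod]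
      exact MultilinearMap.dfinsuppFamily_single
        (fun s => PiTensorProduct.tprod R (s := fun j => M j (s j))) s m)
    (by
      apply PiTensorProduct.ext
      apply MultilinearMap.dfinsupp_ext
      intro p
      apply MultilinearMap.ext
      intro m
      simp only [MultilinearMap.compLinearMap_apply, LinearMap.compMultilinearMap_apply,
        LinearMap.coe_comp, Function.comp_apply, LinearMap.id_apply,
        PiTensorProduct.lift.tprod]
      rw [show (fun j => (DFinsupp.lsingle (p j) : M j (p j) →ₗ[R] Π₀ i, M j i) (m j)) =
        fun j => DFinsupp.single (p j) (m j) from rfl]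
      rw [MultilinearMap.dfinsuppFamily_single _ p m]
      rw [DFinsupp.lsum_single, PiTensorProduct.map_tprod]
      rfl)

/-- Distributive law: for a finite index type `J` and families of `R`-modules
`M j i` (`i ∈ I j`), the iterated tensor product of direct sums
`⨂_{j ∈ J} (⨁_{i ∈ I j} M j i)` is isomorphic as an `R`-module to the direct sum
`⨁_{s ∈ Π_j I j} ⨂_{j ∈ J} M j (s j)` indexed by the set of sections `s`. -/
theorem stmt11 (R : Type*) [CommRing R] (J : Type*) [Fintype J]
    (I : J → Type*) (M : (j : J) → I j → Type*)
    [∀ j i, AddCommGroup (M j i)] [∀ j i, Module R (M j i)] :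
    Nonempty ((PiTensorProduct R fun j => DirectSum (I j) fun i => M j i) ≃ₗ[R]
      DirectSum ((j : J) → I j) fun s => PiTensorProduct R fun j => M j (s j)) := by
  classical
  exact ⟨auxEquiv11 R J I M⟩
end
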